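/- Let G₁ and G₂ be torsion-free groups, G = G₁ * G₂, and n a positive integer. Let φ be an automorphism of G that stabilizes the factor G₁, and let φ₁ be its restriction to G₁. If the automorphism of G/Gⁿ induced by φ has finite order, then the automorphism of G₁/G₁ⁿ induced by φ₁ has finite order. -/

import Mathlib

open scoped Monoid.Coprod

/-- For a group `K`, the subgroup generated by all `n`-th powers of elements of `K`. -/
def powSubgroup (K : Type*) [Group K] (n : ℕ) : Subgroup K :=
  Subgroup.closure {x : K | ∃ k : K, x = k ^ n}

instance powSubgroup_normal (K : Type*) [Group K] (n : ℕ) : (powSubgroup K n).Normal := by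
  constructor
  intro x hx g
  have h : Subgroup.map (MulAut.conj g).toMonoidHom (powSubgroup K n) ≤ powSubgroup K n := by
    rw [powSubgroup, MonoidHom.map_closure]
    apply Subgroup.closure_mono
    rintro _ ⟨_, ⟨y, rfl⟩, rfl⟩
    exact ⟨MulAut.conj g y, by simp⟩
  simpa using h ⟨x, hx, rfl⟩

/-- A monoid is torsion-free if no element other than `1` has finite order
(the definition `Monoid.IsTorsionFree` of the older Mathlib, since removed). -/
def Monoid.IsTorsionFree (G : Type*) [Monoid G] : Prop :=
  ∀ g : G, g ≠ 1 → ¬IsOfFinOrder g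

/-!
The inclusion `G₁ → G₁ ∗ G₂` has the retraction `Monoid.Coprod.fst`, and every homomorphism
maps `n`-th powers to `n`-th powers; hence `G₁/G₁ⁿ → G/Gⁿ` is injective. Since `φ^m`
restricts to `φ₁^m` on `G₁`, triviality of `φ^m` modulo `Gⁿ` pulls back to triviality of
`φ₁^m` modulo `G₁ⁿ`.
-/

section powSubgroup

variable {K L : Type*} [Group K] [Group L]

lemma powSubgroup_map_le (f : K →* L) (n : ℕ) :
    Subgroup.map f (powSubgroup K n) ≤ powSubgroup L n := by
  rw [powSubgroup, MonoidHom.map_closure]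
  apply Subgroup.closure_mono
  rintro _ ⟨_, ⟨y, rfl⟩, rfl⟩
  exact ⟨f y, by simp⟩

lemma mem_powSubgroup_of_map_mem {f : K →* L} {r : L →* K} (hr : ∀ x, r (f x) = x)
    {n : ℕ} {x : K} (hx : f x ∈ powSubgroup L n) : x ∈ powSubgroup K n :=
  hr x ▸ powSubgroup_map_le r n ⟨f x, hx, rfl⟩

end powSubgroup

lemma MulAut.pow_apply_of_apply_eq {K L : Type*} [Group K] [Group L] {f : K →* L}
    {φ : MulAut L} {ψ : MulAut K} (h : ∀ x, φ (f x) = f (ψ x)) (k : ℕ) (x : K) :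
    (φ ^ k) (f x) = f ((ψ ^ k) x) := by
  induction k generalizing x with
  | zero => rfl
  | succ k ih => rw [pow_succ, pow_succ, MulAut.mul_apply, MulAut.mul_apply, h, ih]

theorem stmt_3_general {G₁ G₂ : Type*} [Group G₁] [Group G₂]
    (n : ℕ)
    (φ : MulAut (G₁ ∗ G₂)) (φ₁ : MulAut G₁)
    (hres : ∀ x : G₁, φ ((Monoid.Coprod.inl : G₁ →* G₁ ∗ G₂) x)
      = (Monoid.Coprod.inl : G₁ →* G₁ ∗ G₂) (φ₁ x))
    (hfin : ∃ m : ℕ, 0 < m ∧ ∀ g : G₁ ∗ G₂, (φ ^ m) g * g⁻¹ ∈ powSubgroup (G₁ ∗ G₂) n) :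
    ∃ m : ℕ, 0 < m ∧ ∀ x : G₁, (φ₁ ^ m) x * x⁻¹ ∈ powSubgroup G₁ n := by
  obtain ⟨m, hm, hfin⟩ := hfin
  refine ⟨m, hm, fun x => mem_powSubgroup_of_map_mem (Monoid.Coprod.fst_apply_inl (N := G₂)) ?_⟩
  have h := hfin (Monoid.Coprod.inl x)
  rwa [MulAut.pow_apply_of_apply_eq hres, ← map_inv, ← map_mul] at h

/-- If an automorphism `φ` of `G = G₁ ∗ G₂` stabilizes the factor `G₁` (with restriction
`φ₁`) and the automorphism of `G/Gⁿ` induced by `φ` has finite order (its `m`-th power is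
trivial on the quotient for some `m > 0`), then the automorphism of `G₁/G₁ⁿ` induced by
`φ₁` has finite order. -/
theorem stmt_3 {G₁ G₂ : Type*} [Group G₁] [Group G₂]
    (h₁ : Monoid.IsTorsionFree G₁) (h₂ : Monoid.IsTorsionFree G₂)
    (n : ℕ) (hn : 0 < n)
    (φ : MulAut (G₁ ∗ G₂)) (φ₁ : MulAut G₁)
    (hstab : Subgroup.map φ.toMonoidHom (Monoid.Coprod.inl : G₁ →* G₁ ∗ G₂).range
      = (Monoid.Coprod.inl : G₁ →* G₁ ∗ G₂).range)
    (hres : ∀ x : G₁, φ ((Monoid.Coprod.inl : G₁ →* G₁ ∗ G₂) x)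
      = (Monoid.Coprod.inl : G₁ →* G₁ ∗ G₂) (φ₁ x))
    (hfin : ∃ m : ℕ, 0 < m ∧ ∀ g : G₁ ∗ G₂, (φ ^ m) g * g⁻¹ ∈ powSubgroup (G₁ ∗ G₂) n) :
    ∃ m : ℕ, 0 < m ∧ ∀ x : G₁, (φ₁ ^ m) x * x⁻¹ ∈ powSubgroup G₁ n :=
  stmt_3_general n φ φ₁ hres hfin
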